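/- arXiv:1411.3894 — 2 statements merged into one kernel-verified Lean document; each statement's English description precedes it below -/
import Mathlib

section
/- Let V be a finite-dimensional real inner product space, W a finite group of linear isometries of V, and σ : W → {+1, −1} a group homomorphism; for b ∈ V define the orbit function φ^σ_b : V → ℂ by φ^σ_b(a) = Σ_{w ∈ W} σ(w)·exp(2πi⟨w·b, a⟩). Let Q be a W-invariant additive subgroup of V, let P∨ be an additive subgroup of V with ⟨p, q⟩ ∈ ℤ for all p ∈ P∨ and q ∈ Q, let ρ∨ ∈ V satisfy ρ∨ − w·ρ∨ ∈ P∨ for all w ∈ W, and let M be a positive integer. Then for every a ∈ V with M·a − ρ∨ ∈ P∨, every b ∈ V, every w' ∈ W and every q ∈ Q, φ^σ_{w'·b + M·q}(a) = σ(w')·exp(2πi⟨q, ρ∨⟩)·φ^σ_b(a). -/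
/-- The orbit function `φ^σ_b(a) = Σ_{w ∈ W} σ(w) · exp(2πi⟪w b, a⟫)` attached to a
finite group `W` of linear isometries and a sign homomorphism `σ : W → {±1}`. -/
noncomputable def orbitFn {V : Type*} [NormedAddCommGroup V] [InnerProductSpace ℝ V]
    (W : Subgroup (V ≃ₗᵢ[ℝ] V)) [Fintype W] (σ : W →* ℤˣ) (b a : V) : ℂ :=
  ∑ w : W, ((σ w : ℤ) : ℂ) *
    Complex.exp (2 * Real.pi * Complex.I * ((inner ℝ ((w : V ≃ₗᵢ[ℝ] V) b) a : ℝ) : ℂ))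

/-
Each summand of φ^σ_{w'b + Mq}(a) splits off the factor exp(2πi⟪w q, M a⟫). Writing
M a = ρ∨ + p and w⁻¹ρ∨ = ρ∨ - p' with p, p' ∈ P∨, and using w q ∈ Q, the exponent
⟪w q, M a⟫ = ⟪q, w⁻¹ρ∨⟫ + ⟪w q, p⟫ differs from ⟪q, ρ∨⟫ by an integer, so the factor is
exp(2πi⟪q, ρ∨⟫) for every w. The remaining twist by w' is absorbed by reindexing the sum
over W by w ↦ w w', which costs σ(w') because σ takes values in {±1}.
-/

lemma Complex.exp_two_pi_I_mul_add_intCast (x : ℝ) (n : ℤ) :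
    Complex.exp (2 * Real.pi * Complex.I * ((x + n : ℝ) : ℂ)) =
      Complex.exp (2 * Real.pi * Complex.I * (x : ℂ)) := by
  rw [Complex.exp_eq_exp_iff_exists_int]
  exact ⟨n, by push_cast; ring⟩

lemma MonoidHom.intUnits_map_eq_mul_map_mul {G : Type*} [Group G] (σ : G →* ℤˣ) (g h : G) :
    σ g = σ h * σ (g * h) := by
  rw [map_mul, mul_left_comm, Int.units_mul_self, mul_one]

section OrbitFn

variable {V : Type*} [NormedAddCommGroup V] [InnerProductSpace ℝ V]
  {W : Subgroup (V ≃ₗᵢ[ℝ] V)} {Q Pv : AddSubgroup V} {ρv : V}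

lemma exists_inner_map_smul_eq_add_intCast
    (hQ : ∀ w : W, ∀ q ∈ Q, (w : V ≃ₗᵢ[ℝ] V) q ∈ Q)
    (hdual : ∀ p ∈ Pv, ∀ q ∈ Q, ∃ m : ℤ, (inner ℝ p q : ℝ) = m)
    (hρv : ∀ w : W, ρv - (w : V ≃ₗᵢ[ℝ] V) ρv ∈ Pv)
    {t : ℝ} {a : V} (ha : t • a - ρv ∈ Pv) (w : W) {q : V} (hq : q ∈ Q) :
    ∃ n : ℤ, inner ℝ ((w : V ≃ₗᵢ[ℝ] V) q) (t • a) = inner ℝ q ρv + n := by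
  obtain ⟨n₁, hn₁⟩ := hdual _ ha _ (hQ w q hq)
  obtain ⟨n₂, hn₂⟩ := hdual _ (hρv w⁻¹) _ hq
  have hsymm : ((w⁻¹ : W) : V ≃ₗᵢ[ℝ] V) = (w : V ≃ₗᵢ[ℝ] V).symm := rfl
  refine ⟨n₁ - n₂, ?_⟩
  calc inner ℝ ((w : V ≃ₗᵢ[ℝ] V) q) (t • a)
      = inner ℝ ((w : V ≃ₗᵢ[ℝ] V) q) (t • a - ρv) + inner ℝ q ((w : V ≃ₗᵢ[ℝ] V).symm ρv) := by
        rw [← LinearIsometryEquiv.inner_map_eq_flip, ← inner_add_right, sub_add_cancel]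
    _ = inner ℝ q ρv + n₁ - n₂ := by
        rw [real_inner_comm, hn₁, ← hsymm, ← hn₂, inner_sub_left, real_inner_comm q ρv,
          real_inner_comm q]
        ring
    _ = inner ℝ q ρv + ((n₁ - n₂ : ℤ) : ℝ) := by push_cast; ring

variable [Fintype W] (σ : W →* ℤˣ)

lemma orbitFn_map (w' : W) (b a : V) :
    orbitFn W σ ((w' : V ≃ₗᵢ[ℝ] V) b) a = ((σ w' : ℤ) : ℂ) * orbitFn W σ b a := by
  unfold orbitFn
  rw [Finset.mul_sum]
  refine Fintype.sum_equiv (Equiv.mulRight w') _ _ fun w => ?_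
  rw [Equiv.coe_mulRight, σ.intUnits_map_eq_mul_map_mul w w', Units.val_mul, Int.cast_mul,
    mul_assoc]
  rfl

lemma orbitFn_add_smul
    (hQ : ∀ w : W, ∀ q ∈ Q, (w : V ≃ₗᵢ[ℝ] V) q ∈ Q)
    (hdual : ∀ p ∈ Pv, ∀ q ∈ Q, ∃ m : ℤ, (inner ℝ p q : ℝ) = m)
    (hρv : ∀ w : W, ρv - (w : V ≃ₗᵢ[ℝ] V) ρv ∈ Pv)
    {t : ℝ} {a : V} (ha : t • a - ρv ∈ Pv) (c : V) {q : V} (hq : q ∈ Q) :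
    orbitFn W σ (c + t • q) a =
      Complex.exp (2 * Real.pi * Complex.I * ((inner ℝ q ρv : ℝ) : ℂ)) * orbitFn W σ c a := by
  unfold orbitFn
  rw [Finset.mul_sum]
  refine Finset.sum_congr rfl fun w _ => ?_
  obtain ⟨n, hn⟩ := exists_inner_map_smul_eq_add_intCast hQ hdual hρv ha w hq
  rw [map_add, map_smul, inner_add_left, real_inner_smul_left, ← real_inner_smul_right, hn,
    Complex.ofReal_add, mul_add, Complex.exp_add, Complex.exp_two_pi_I_mul_add_intCast]
  ring

end OrbitFn

theorem stmt_9_general {V : Type*} [NormedAddCommGroup V] [InnerProductSpace ℝ V]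
    (W : Subgroup (V ≃ₗᵢ[ℝ] V)) [Fintype W] (σ : W →* ℤˣ)
    (Q Pv : AddSubgroup V)
    (hQ : ∀ w : W, ∀ q ∈ Q, (w : V ≃ₗᵢ[ℝ] V) q ∈ Q)
    (hdual : ∀ p ∈ Pv, ∀ q ∈ Q, ∃ m : ℤ, (inner ℝ p q : ℝ) = m)
    (ρv : V) (hρv : ∀ w : W, ρv - (w : V ≃ₗᵢ[ℝ] V) ρv ∈ Pv)
    (M : ℕ)
    (a : V) (ha : (M : ℝ) • a - ρv ∈ Pv)
    (b : V) (w' : W) (q : V) (hq : q ∈ Q) :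
    orbitFn W σ ((w' : V ≃ₗᵢ[ℝ] V) b + (M : ℝ) • q) a =
      ((σ w' : ℤ) : ℂ) *
        Complex.exp (2 * Real.pi * Complex.I * ((inner ℝ q ρv : ℝ) : ℂ)) *
        orbitFn W σ b a := by
  rw [orbitFn_add_smul σ hQ hdual hρv ha _ hq, orbitFn_map]
  ring

/-- With `Q` a `W`-invariant additive subgroup, `P∨` ℤ-dual to `Q`,
`ρ∨` an admissible shift and `M ≥ 1`, for every point `a` of the shifted grid
(`M·a - ρ∨ ∈ P∨`), every `b ∈ V`, `w' ∈ W`, `q ∈ Q`: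
`φ^σ_{w'·b + M·q}(a) = σ(w') · exp(2πi⟪q, ρ∨⟫) · φ^σ_b(a)`. -/
theorem stmt_9 {V : Type*} [NormedAddCommGroup V] [InnerProductSpace ℝ V]
    [FiniteDimensional ℝ V]
    (W : Subgroup (V ≃ₗᵢ[ℝ] V)) [Fintype W] (σ : W →* ℤˣ)
    (Q Pv : AddSubgroup V)
    (hQ : ∀ w : W, ∀ q ∈ Q, (w : V ≃ₗᵢ[ℝ] V) q ∈ Q)
    (hdual : ∀ p ∈ Pv, ∀ q ∈ Q, ∃ m : ℤ, (inner ℝ p q : ℝ) = m)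
    (ρv : V) (hρv : ∀ w : W, ρv - (w : V ≃ₗᵢ[ℝ] V) ρv ∈ Pv)
    (M : ℕ) (hM : 0 < M)
    (a : V) (ha : (M : ℝ) • a - ρv ∈ Pv)
    (b : V) (w' : W) (q : V) (hq : q ∈ Q) :
    orbitFn W σ ((w' : V ≃ₗᵢ[ℝ] V) b + (M : ℝ) • q) a =
      ((σ w' : ℤ) : ℂ) *
        Complex.exp (2 * Real.pi * Complex.I * ((inner ℝ q ρv : ℝ) : ℂ)) *
        orbitFn W σ b a :=
  stmt_9_general W σ Q Pv hQ hdual ρv hρv M a ha b w' q hq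
end

section
/- Let V be a finite-dimensional real inner product space, W a finite group of linear isometries of V, σ : W → {+1, −1} a group homomorphism, and M ≥ 1 an integer; for b ∈ V define φ^σ_b : V → ℂ by φ^σ_b(a) = Σ_{w ∈ W} σ(w)·exp(2πi⟨w·b, a⟩). Let Q∨ ⊆ P∨ be W-invariant additive subgroups of V, let P be an additive subgroup of V with ⟨λ, q⟩ ∈ ℤ for all λ ∈ P and q ∈ Q∨, and set Q = {v ∈ V : ⟨v, p⟩ ∈ ℤ for all p ∈ P∨}. Let ρ ∈ V satisfy ρ − w·ρ ∈ P for all w ∈ W, let ρ∨ ∈ V satisfy ρ∨ − w·ρ∨ ∈ P∨ for all w ∈ W, and let b ∈ ρ + P. Let Y be a finite subset of V such that y ↦ y + Q∨ is a bijection from Y onto the set of cosets {v + Q∨ : v ∈ V, M·v − ρ∨ ∈ P∨}. If σ(w)·exp(2πi⟨b − w·b, ρ∨⟩/M) = 1 for every w ∈ W with b − w·b ∈ M·Q, then Σ_{y ∈ Y} |φ^σ_b(y)|² = |W|·|Y|·#{w ∈ W : b − w·b ∈ M·Q}. -/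
open Finset ComplexConjugate
open scoped Pointwise RealInnerProductSpace

noncomputable def expTwoPiI (t : ℝ) : ℂ := Complex.exp (2 * Real.pi * Complex.I * t)

lemma expTwoPiI_add (s t : ℝ) : expTwoPiI (s + t) = expTwoPiI s * expTwoPiI t := by
  rw [expTwoPiI, expTwoPiI, expTwoPiI, ← Complex.exp_add]
  push_cast
  ring_nf

lemma expTwoPiI_intCast (m : ℤ) : expTwoPiI m = 1 := by
  simpa [expTwoPiI, mul_comm] using Complex.exp_int_mul_two_pi_mul_I m

lemma expTwoPiI_add_intCast (s : ℝ) (m : ℤ) : expTwoPiI (s + m) = expTwoPiI s := by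
  rw [expTwoPiI_add, expTwoPiI_intCast, mul_one]

lemma expTwoPiI_eq_one_iff (t : ℝ) : expTwoPiI t = 1 ↔ ∃ m : ℤ, t = m := by
  have h2πI : 2 * (Real.pi : ℂ) * Complex.I ≠ 0 := by simp [Real.pi_ne_zero]
  rw [expTwoPiI, Complex.exp_eq_one_iff]
  refine exists_congr fun m => ⟨fun h => ?_, fun h => by rw [h]; push_cast; ring⟩
  exact_mod_cast mul_left_cancel₀ h2πI (h.trans (mul_comm _ _))

lemma conj_expTwoPiI (t : ℝ) : conj (expTwoPiI t) = expTwoPiI (-t) := by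
  rw [expTwoPiI, expTwoPiI, ← Complex.exp_conj]
  simp [map_ofNat]

section Dual

variable {V : Type*} [NormedAddCommGroup V] [InnerProductSpace ℝ V]

def intDual (L : AddSubgroup V) : AddSubgroup V where
  carrier := {v | ∀ p ∈ L, ∃ m : ℤ, ⟪v, p⟫ = m}
  zero_mem' _ _ := ⟨0, by simp⟩
  add_mem' {u v} hu hv p hp := by
    obtain ⟨k, hk⟩ := hu p hp
    obtain ⟨l, hl⟩ := hv p hp
    exact ⟨k + l, by rw [inner_add_left, hk, hl]; push_cast; ring⟩
  neg_mem' {v} hv p hp := by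
    obtain ⟨k, hk⟩ := hv p hp
    exact ⟨-k, by rw [inner_neg_left, hk]; push_cast; ring⟩

lemma mem_intDual {L : AddSubgroup V} {v : V} :
    v ∈ intDual L ↔ ∀ p ∈ L, ∃ m : ℤ, ⟪v, p⟫ = m :=
  Iff.rfl

variable {W : Subgroup (V ≃ₗᵢ[ℝ] V)} {L : AddSubgroup V}

lemma inner_subgroup_apply_left (w : W) (x y : V) :
    ⟪(w : V ≃ₗᵢ[ℝ] V) x, y⟫ = ⟪x, ((w⁻¹ : W) : V ≃ₗᵢ[ℝ] V) y⟫ :=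
  LinearIsometryEquiv.inner_map_eq_flip _ x y

lemma subgroup_apply_mem_intDual (hL : ∀ w : W, ∀ p ∈ L, (w : V ≃ₗᵢ[ℝ] V) p ∈ L) (w : W)
    {v : V} (hv : v ∈ intDual L) : (w : V ≃ₗᵢ[ℝ] V) v ∈ intDual L := fun p hp => by
  rw [inner_subgroup_apply_left]
  exact hv _ (hL _ p hp)

lemma subgroup_apply_mem_smul_intDual_iff
    (hL : ∀ w : W, ∀ p ∈ L, (w : V ≃ₗᵢ[ℝ] V) p ∈ L) (w : W) {m : ℝ} (hm : m ≠ 0) {v : V} :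
    (w : V ≃ₗᵢ[ℝ] V) v ∈ m • (intDual L : Set V) ↔ v ∈ m • (intDual L : Set V) := by
  simp only [Set.mem_smul_set_iff_inv_smul_mem₀ hm, SetLike.mem_coe, ← map_smul]
  refine ⟨fun h => ?_, subgroup_apply_mem_intDual hL w⟩
  simpa using subgroup_apply_mem_intDual hL w⁻¹ h

end Dual

lemma Finset.sum_eq_zero_of_map_add_eq_mul {G R : Type*} [AddGroup G] [CommRing R] [IsDomain R]
    {S : Finset G} {g : G} (hS : ∀ x, x + g ∈ S ↔ x ∈ S) {f : G → R} {z : R} (hz : z ≠ 1)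
    (hf : ∀ x, f (x + g) = z * f x) : ∑ x ∈ S, f x = 0 := by
  have hshift : z * ∑ x ∈ S, f x = ∑ x ∈ S, f x := by
    rw [mul_sum]
    exact sum_equiv (Equiv.addRight g) (fun x => (hS x).symm) fun x _ => (hf x).symm
  have : (1 - z) * ∑ x ∈ S, f x = 0 := by rw [sub_mul, one_mul, hshift, sub_self]
  exact (mul_eq_zero.mp this).resolve_left (sub_ne_zero.mpr hz.symm)

lemma Finset.sum_eq_zero_of_bijOn_mk {G R : Type*} [AddCommGroup G] [CommRing R] [IsDomain R]
    {K : AddSubgroup G} {Y : Finset G} {T : Set (G ⧸ K)}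
    (hY : Set.BijOn (fun y : G => (y : G ⧸ K)) ↑Y T) {g : G} (hT : ∀ x, x + (g : G ⧸ K) ∈ T ↔ x ∈ T)
    {f : G → R} (hK : ∀ v, ∀ k ∈ K, f (v + k) = f v) {z : R} (hz : z ≠ 1)
    (hf : ∀ v, f (v + g) = z * f v) : ∑ y ∈ Y, f y = 0 := by
  classical
  let F : G ⧸ K → R := Quotient.lift f fun u v huv => by
    rw [← hK u (-u + v) (QuotientAddGroup.leftRel_apply.mp huv), add_neg_cancel_left]
  have hFT : ((Y.image fun y : G => (y : G ⧸ K)) : Set (G ⧸ K)) = T := by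
    rw [coe_image, hY.image_eq]
  change ∑ y ∈ Y, F y = 0
  rw [← sum_image fun x hx y hy h => hY.injOn hx hy h]
  refine sum_eq_zero_of_map_add_eq_mul (g := (g : G ⧸ K)) (fun x => ?_) hz fun x => ?_
  · rw [← mem_coe, hFT, hT, ← hFT, mem_coe]
  · induction x using QuotientAddGroup.induction_on with
    | H v => exact hf v

section GridCosets

variable {V : Type*} [AddCommGroup V] [Module ℝ V]

/-- The coset space `m⁻¹ (r + L) / K`; with `(Q∨, P∨, M, ρ∨)` it is the set that `Y` parametrizes. -/
def gridCosets (K L : AddSubgroup V) (m : ℝ) (r : V) : Set (V ⧸ K) :=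
  {x | ∃ v : V, m • v - r ∈ L ∧ (v : V ⧸ K) = x}

lemma add_mk_mem_gridCosets_iff {K L : AddSubgroup V} {m : ℝ} {r t : V} (ht : m • t ∈ L)
    (x : V ⧸ K) : x + (t : V ⧸ K) ∈ gridCosets K L m r ↔ x ∈ gridCosets K L m r := by
  constructor
  · rintro ⟨v, hv, hvx⟩
    refine ⟨v - t, ?_, by rw [QuotientAddGroup.mk_sub, hvx, add_sub_cancel_right]⟩
    simpa [smul_sub, sub_right_comm] using L.sub_mem hv ht
  · rintro ⟨v, hv, rfl⟩
    refine ⟨v + t, ?_, rfl⟩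
    simpa [smul_add, add_sub_right_comm] using L.add_mem hv ht

end GridCosets

section CharacterSum

variable {V : Type*} [NormedAddCommGroup V] [InnerProductSpace ℝ V] {Qv Pv : AddSubgroup V}
  {m : ℝ} {ρv : V} {Y : Finset V}

lemma expTwoPiI_inner_add_mem {c : V} (hc : c ∈ intDual Qv) (v : V) {q : V} (hq : q ∈ Qv) :
    expTwoPiI ⟪c, v + q⟫ = expTwoPiI ⟪c, v⟫ := by
  obtain ⟨k, hk⟩ := hc q hq
  rw [inner_add_right, hk, expTwoPiI_add_intCast]

lemma sum_expTwoPiI_inner_eq_zero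
    (hY : Set.BijOn (fun y : V => (y : V ⧸ Qv)) ↑Y (gridCosets Qv Pv m ρv)) (hm : m ≠ 0)
    {c : V} (hc : c ∈ intDual Qv) (hcm : c ∉ m • (intDual Pv : Set V)) :
    ∑ y ∈ Y, expTwoPiI ⟪c, y⟫ = 0 := by
  rw [Set.mem_smul_set_iff_inv_smul_mem₀ hm, SetLike.mem_coe, mem_intDual] at hcm
  push Not at hcm
  obtain ⟨p, hp, hnot⟩ := hcm
  have hinner : ⟪c, m⁻¹ • p⟫ = ⟪m⁻¹ • c, p⟫ := by
    rw [real_inner_smul_left, real_inner_smul_right]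
  refine Finset.sum_eq_zero_of_bijOn_mk hY
    (add_mk_mem_gridCosets_iff (by rwa [smul_inv_smul₀ hm])) (expTwoPiI_inner_add_mem hc)
    (z := expTwoPiI ⟪c, m⁻¹ • p⟫) ?_ fun v => by rw [inner_add_right, expTwoPiI_add, mul_comm]
  rw [Ne, expTwoPiI_eq_one_iff, hinner]
  exact fun ⟨k, hk⟩ => hnot k hk

lemma sum_expTwoPiI_inner_smul
    (hY : Set.BijOn (fun y : V => (y : V ⧸ Qv)) ↑Y (gridCosets Qv Pv m ρv))
    {q : V} (hq : q ∈ intDual Pv) (hmq : m • q ∈ intDual Qv) :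
    ∑ y ∈ Y, expTwoPiI ⟪m • q, y⟫ = Y.card * expTwoPiI ⟪q, ρv⟫ := by
  rw [← nsmul_eq_mul, ← sum_const]
  refine sum_congr rfl fun y hy => ?_
  obtain ⟨v, hv, hvy⟩ := hY.mapsTo hy
  obtain ⟨k, hk⟩ := hq _ hv
  have hvq : ⟪m • q, v⟫ = ⟪q, ρv⟫ + k := by
    rw [← hk, real_inner_smul_left, inner_sub_right, real_inner_smul_right]
    ring
  rw [← add_neg_cancel_left v y, expTwoPiI_inner_add_mem hmq v
    (QuotientAddGroup.eq.mp hvy), hvq, expTwoPiI_add_intCast]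

open Classical in
lemma sum_expTwoPiI_inner
    (hY : Set.BijOn (fun y : V => (y : V ⧸ Qv)) ↑Y (gridCosets Qv Pv m ρv)) (hm : m ≠ 0)
    {c : V} (hc : c ∈ intDual Qv) :
    ∑ y ∈ Y, expTwoPiI ⟪c, y⟫ =
      if c ∈ m • (intDual Pv : Set V) then Y.card * expTwoPiI (⟪c, ρv⟫ / m) else 0 := by
  split_ifs with hcm
  · obtain ⟨q, hq, rfl⟩ := hcm
    rw [sum_expTwoPiI_inner_smul hY hq hc, real_inner_smul_left, mul_div_cancel_left₀ _ hm]
  · exact sum_expTwoPiI_inner_eq_zero hY hm hc hcm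

lemma sum_expTwoPiI_inner_subgroup_apply {W : Subgroup (V ≃ₗᵢ[ℝ] V)}
    (hY : Set.BijOn (fun y : V => (y : V ⧸ Qv)) ↑Y (gridCosets Qv Pv m ρv)) (hm : m ≠ 0)
    (hQvW : ∀ w : W, ∀ q ∈ Qv, (w : V ≃ₗᵢ[ℝ] V) q ∈ Qv)
    (hPvW : ∀ w : W, ∀ p ∈ Pv, (w : V ≃ₗᵢ[ℝ] V) p ∈ Pv)
    (hρv : ∀ w : W, ρv - (w : V ≃ₗᵢ[ℝ] V) ρv ∈ Pv) (w : W) {c : V} (hc : c ∈ intDual Qv) :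
    ∑ y ∈ Y, expTwoPiI ⟪(w : V ≃ₗᵢ[ℝ] V) c, y⟫ = ∑ y ∈ Y, expTwoPiI ⟪c, y⟫ := by
  rw [sum_expTwoPiI_inner hY hm (subgroup_apply_mem_intDual hQvW w hc),
    sum_expTwoPiI_inner hY hm hc, subgroup_apply_mem_smul_intDual_iff hPvW w hm]
  split_ifs with hcm
  · obtain ⟨q, hq, rfl⟩ := hcm
    obtain ⟨k, hk⟩ := hq _ (hρv w⁻¹)
    have hphase : ⟪(w : V ≃ₗᵢ[ℝ] V) (m • q), ρv⟫ / m = ⟪m • q, ρv⟫ / m + (-k : ℤ) := by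
      rw [inner_subgroup_apply_left, ← sub_sub_cancel ρv (((w⁻¹ : W) : V ≃ₗᵢ[ℝ] V) ρv),
        inner_sub_right, real_inner_smul_left, real_inner_smul_left, hk]
      field_simp
      push_cast
      ring
    rw [hphase, expTwoPiI_add_intCast]
  · rfl

end CharacterSum

section OrbitFunction

variable {V : Type*} [NormedAddCommGroup V] [InnerProductSpace ℝ V]

lemma sub_subgroup_apply_mem_intDual {W : Subgroup (V ≃ₗᵢ[ℝ] V)} {P Qv : AddSubgroup V}
    (hQvW : ∀ w : W, ∀ q ∈ Qv, (w : V ≃ₗᵢ[ℝ] V) q ∈ Qv) (hdual : P ≤ intDual Qv) {ρ b : V}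
    (hρ : ∀ w : W, ρ - (w : V ≃ₗᵢ[ℝ] V) ρ ∈ P) (hb : b - ρ ∈ P) (u : W) :
    b - (u : V ≃ₗᵢ[ℝ] V) b ∈ intDual Qv := by
  have hsplit : b - (u : V ≃ₗᵢ[ℝ] V) b = (b - ρ) + (ρ - (u : V ≃ₗᵢ[ℝ] V) ρ) -
      (u : V ≃ₗᵢ[ℝ] V) (b - ρ) := by
    rw [map_sub]; abel
  rw [hsplit]
  exact sub_mem (add_mem (hdual hb) (hdual (hρ u)))
    (subgroup_apply_mem_intDual hQvW u (hdual hb))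

lemma intCast_sign_mul_sign_mul {G : Type*} [Group G] (σ : G →* ℤˣ) (g h : G) :
    ((σ g : ℤ) : ℂ) * ((σ (g * h) : ℤ) : ℂ) = ((σ h : ℤ) : ℂ) := by
  rw [map_mul, Units.val_mul, Int.cast_mul, ← mul_assoc, ← Int.cast_mul, ← Units.val_mul,
    Int.units_mul_self, Units.val_one, Int.cast_one, one_mul]

variable (W : Subgroup (V ≃ₗᵢ[ℝ] V)) [Fintype W] (σ : W →* ℤˣ)

lemma orbitFn_eq_sum_expTwoPiI (b a : V) :
    orbitFn W σ b a = ∑ w : W, ((σ w : ℤ) : ℂ) * expTwoPiI ⟪(w : V ≃ₗᵢ[ℝ] V) b, a⟫ :=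
  rfl

lemma sq_norm_orbitFn (b a : V) :
    ((‖orbitFn W σ b a‖ ^ 2 : ℝ) : ℂ) = ∑ w : W, ∑ u : W,
      ((σ u : ℤ) : ℂ) * expTwoPiI ⟪(w : V ≃ₗᵢ[ℝ] V) (b - (u : V ≃ₗᵢ[ℝ] V) b), a⟫ := by
  rw [Complex.ofReal_pow, ← Complex.mul_conj', orbitFn_eq_sum_expTwoPiI, map_sum, sum_mul_sum]
  refine sum_congr rfl fun w _ => ?_
  rw [← Equiv.sum_comp (Equiv.mulLeft w)]
  refine sum_congr rfl fun u _ => ?_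
  rw [map_mul, map_intCast, conj_expTwoPiI, ← intCast_sign_mul_sign_mul σ w u, map_sub,
    inner_sub_left, sub_eq_add_neg, expTwoPiI_add]
  simp only [Equiv.coe_mulLeft, Subgroup.coe_mul, LinearIsometryEquiv.coe_mul, Function.comp_apply]
  ring

lemma sum_sq_norm_orbitFn (b : V) (Y : Finset V) :
    ((∑ y ∈ Y, ‖orbitFn W σ b y‖ ^ 2 : ℝ) : ℂ) = ∑ w : W, ∑ u : W, ((σ u : ℤ) : ℂ) *
      ∑ y ∈ Y, expTwoPiI ⟪(w : V ≃ₗᵢ[ℝ] V) (b - (u : V ≃ₗᵢ[ℝ] V) b), y⟫ := by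
  simp_rw [Complex.ofReal_sum, sq_norm_orbitFn, mul_sum]
  rw [sum_comm]
  exact sum_congr rfl fun w _ => sum_comm

end OrbitFunction

theorem stmt_18_general {V : Type*} [NormedAddCommGroup V] [InnerProductSpace ℝ V]
    (W : Subgroup (V ≃ₗᵢ[ℝ] V)) [Fintype W] (σ : W →* ℤˣ) (M : ℕ) (hM : 1 ≤ M)
    (Qv Pv : AddSubgroup V)
    (hQvW : ∀ w : W, ∀ q ∈ Qv, (w : V ≃ₗᵢ[ℝ] V) q ∈ Qv)
    (hPvW : ∀ w : W, ∀ p ∈ Pv, (w : V ≃ₗᵢ[ℝ] V) p ∈ Pv)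
    (P : AddSubgroup V) (hdual : ∀ l ∈ P, ∀ q ∈ Qv, ∃ m : ℤ, (inner ℝ l q : ℝ) = m)
    (Q : Set V) (hQ : Q = {v : V | ∀ p ∈ Pv, ∃ m : ℤ, (inner ℝ v p : ℝ) = m})
    (ρ : V) (hρ : ∀ w : W, ρ - (w : V ≃ₗᵢ[ℝ] V) ρ ∈ P)
    (ρv : V) (hρv : ∀ w : W, ρv - (w : V ≃ₗᵢ[ℝ] V) ρv ∈ Pv)
    (b : V) (hb : b - ρ ∈ P)
    (Y : Finset V)
    (hY : Set.BijOn (fun y => (QuotientAddGroup.mk y : V ⧸ Qv)) ↑Y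
      {x : V ⧸ Qv | ∃ v : V, (M : ℝ) • v - ρv ∈ Pv ∧ QuotientAddGroup.mk v = x})
    (hstab : ∀ w : W, (∃ q ∈ Q, b - (w : V ≃ₗᵢ[ℝ] V) b = (M : ℝ) • q) →
      ((σ w : ℤ) : ℂ) * Complex.exp (2 * Real.pi * Complex.I *
        (((inner ℝ (b - (w : V ≃ₗᵢ[ℝ] V) b) ρv : ℝ) / (M : ℝ) : ℝ) : ℂ)) = 1) :
    ∑ y ∈ Y, ‖orbitFn W σ b y‖ ^ 2 =
      (Fintype.card W : ℝ) * (Y.card : ℝ) *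
        ({w : W | ∃ q ∈ Q, b - (w : V ≃ₗᵢ[ℝ] V) b = (M : ℝ) • q}.ncard : ℝ) := by
  classical
  have hM0 : (M : ℝ) ≠ 0 := Nat.cast_ne_zero.mpr (by omega)
  have hmem_smul : ∀ c : V, (∃ q ∈ Q, c = (M : ℝ) • q) ↔ c ∈ (M : ℝ) • (intDual Pv : Set V) := by
    intro c
    rw [hQ, Set.mem_smul_set]
    exact exists_congr fun q => and_congr Iff.rfl eq_comm
  have hc : ∀ u : W, b - (u : V ≃ₗᵢ[ℝ] V) b ∈ intDual Qv :=
    sub_subgroup_apply_mem_intDual hQvW hdual hρ hb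
  have hterm : ∀ u : W, ((σ u : ℤ) : ℂ) * ∑ y ∈ Y, expTwoPiI ⟪b - (u : V ≃ₗᵢ[ℝ] V) b, y⟫ =
      if ∃ q ∈ Q, b - (u : V ≃ₗᵢ[ℝ] V) b = (M : ℝ) • q then (Y.card : ℂ) else 0 := by
    intro u
    rw [sum_expTwoPiI_inner hY hM0 (hc u), ← hmem_smul]
    split_ifs with hu
    · rw [mul_left_comm, show ((σ u : ℤ) : ℂ) * expTwoPiI _ = 1 from hstab u hu, mul_one]
    · rw [mul_zero]
  apply Complex.ofReal_injective
  rw [sum_sq_norm_orbitFn]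
  simp_rw [sum_expTwoPiI_inner_subgroup_apply hY hM0 hQvW hPvW hρv _ (hc _), hterm]
  rw [Set.ncard_eq_toFinset_card', Set.toFinset_ofPred]
  simp only [sum_ite, sum_const_zero, add_zero, sum_const, nsmul_eq_mul, card_univ]
  push_cast
  ring

/-- the diagonal (norm) case of the discrete orthogonality of orbit
functions: in the situation of Statement 16, if
`σ(w)·exp(2πi⟪b - w·b, ρ∨⟫/M) = 1` for every `w ∈ W` with `b - w·b ∈ M·Q`, then
`Σ_{y ∈ Y} |φ^σ_b(y)|² = |W|·|Y|·#{w ∈ W : b - w·b ∈ M·Q}`. -/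
theorem stmt_18 {V : Type*} [NormedAddCommGroup V] [InnerProductSpace ℝ V]
    [FiniteDimensional ℝ V]
    (W : Subgroup (V ≃ₗᵢ[ℝ] V)) [Fintype W] (σ : W →* ℤˣ) (M : ℕ) (hM : 1 ≤ M)
    (Qv Pv : AddSubgroup V) (hQvPv : Qv ≤ Pv)
    (hQvW : ∀ w : W, ∀ q ∈ Qv, (w : V ≃ₗᵢ[ℝ] V) q ∈ Qv)
    (hPvW : ∀ w : W, ∀ p ∈ Pv, (w : V ≃ₗᵢ[ℝ] V) p ∈ Pv)
    (P : AddSubgroup V) (hdual : ∀ l ∈ P, ∀ q ∈ Qv, ∃ m : ℤ, (inner ℝ l q : ℝ) = m)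
    (Q : Set V) (hQ : Q = {v : V | ∀ p ∈ Pv, ∃ m : ℤ, (inner ℝ v p : ℝ) = m})
    (ρ : V) (hρ : ∀ w : W, ρ - (w : V ≃ₗᵢ[ℝ] V) ρ ∈ P)
    (ρv : V) (hρv : ∀ w : W, ρv - (w : V ≃ₗᵢ[ℝ] V) ρv ∈ Pv)
    (b : V) (hb : b - ρ ∈ P)
    (Y : Finset V)
    (hY : Set.BijOn (fun y => (QuotientAddGroup.mk y : V ⧸ Qv)) ↑Y
      {x : V ⧸ Qv | ∃ v : V, (M : ℝ) • v - ρv ∈ Pv ∧ QuotientAddGroup.mk v = x})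
    (hstab : ∀ w : W, (∃ q ∈ Q, b - (w : V ≃ₗᵢ[ℝ] V) b = (M : ℝ) • q) →
      ((σ w : ℤ) : ℂ) * Complex.exp (2 * Real.pi * Complex.I *
        (((inner ℝ (b - (w : V ≃ₗᵢ[ℝ] V) b) ρv : ℝ) / (M : ℝ) : ℝ) : ℂ)) = 1) :
    ∑ y ∈ Y, ‖orbitFn W σ b y‖ ^ 2 =
      (Fintype.card W : ℝ) * (Y.card : ℝ) *
        ({w : W | ∃ q ∈ Q, b - (w : V ≃ₗᵢ[ℝ] V) b = (M : ℝ) • q}.ncard : ℝ) :=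
  stmt_18_general W σ M hM Qv Pv hQvW hPvW P hdual Q hQ ρ hρ ρv hρv b hb Y hY hstab
end
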